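/- arXiv:0804.2115 — 2 statements merged into one kernel-verified Lean document; each statement's English description precedes it below -/
import Mathlib

section
/- For any monic subset S of k⟨X⟩ ⊗ k⟨Y⟩ and any f ∈ k⟨X⟩ ⊗ k⟨Y⟩, f can be written as f = Σᵢ αᵢ aᵢsᵢbᵢ + Σⱼ βⱼuⱼ, where αᵢ, βⱼ ∈ k, aᵢ, bᵢ ∈ N, sᵢ ∈ S, uⱼ ∈ Irr(S), and all aᵢs̄ᵢbᵢ ≤ f̄ and uⱼ ≤ f̄. -/
/-- A monomial order: a well-founded strict total order compatible with multiplication. -/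
def MonOrd {M : Type*} [Monoid M] (lt : M → M → Prop) : Prop :=
  IsStrictTotalOrder M lt ∧ WellFounded lt ∧
    ∀ u v w₁ w₂ : M, lt u v → lt (w₁ * u * w₂) (w₁ * v * w₂)

/-- `m` is the leading word of `f` with respect to the order `lt`. -/
def IsLeadR {k M : Type*} [Semiring k] (lt : M → M → Prop)
    (f : MonoidAlgebra k M) (m : M) : Prop :=
  m ∈ f.coeff.support ∧ ∀ u ∈ f.coeff.support, u ≠ m → lt u m

/-- `f` is monic: its leading coefficient is `1`. -/
def MonicR {k M : Type*} [Semiring k] (lt : M → M → Prop) (f : MonoidAlgebra k M) : Prop :=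
  ∃ m, IsLeadR lt f m ∧ f.coeff m = 1

/-- The monomial `m` viewed as an element of the monoid algebra. -/
noncomputable def mono (k : Type*) {M : Type*} [Semiring k] [Monoid M] (m : M) :
    MonoidAlgebra k M := MonoidAlgebra.of k M m

/-- `h` is trivial modulo `(S, w)`: it is a linear combination `Σ αᵢ aᵢ sᵢ bᵢ`
with `sᵢ ∈ S` and leading words `aᵢ s̄ᵢ bᵢ < w`. -/
def TrivModR {k M : Type*} [Semiring k] [Monoid M] (lt : M → M → Prop)
    (S : Set (MonoidAlgebra k M)) (w : M) (h : MonoidAlgebra k M) : Prop :=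
  ∃ (n : ℕ) (α : Fin n → k) (a b : Fin n → M) (s : Fin n → MonoidAlgebra k M),
    (∀ i, s i ∈ S) ∧
    h = ∑ i, α i • (mono k (a i) * s i * mono k (b i)) ∧
    ∀ i, ∃ m, IsLeadR lt (s i) m ∧ lt (a i * m * b i) w

/-- Gröbner–Shirshov basis in a free associative algebra `k⟨Z⟩`:
all intersection and inclusion compositions are trivial. -/
def FIsGSB {k Z : Type*} [Ring k] (lt : FreeMonoid Z → FreeMonoid Z → Prop)
    (S : Set (MonoidAlgebra k (FreeMonoid Z))) : Prop :=
  (∀ s ∈ S, MonicR lt s) ∧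
  ∀ f ∈ S, ∀ g ∈ S, ∀ mf mg : FreeMonoid Z, IsLeadR lt f mf → IsLeadR lt g mg →
    ((∀ a b : FreeMonoid Z, mf * b = a * mg →
        (mf * b).length < mf.length + mg.length →
        TrivModR lt S (mf * b) (f * mono k b - mono k a * g)) ∧
     (∀ a b : FreeMonoid Z, mf = a * mg * b →
        TrivModR lt S mf (f - mono k a * g * mono k b)))

/-- the deg-lex order on words induced by an order on letters -/
def degLex {A : Type*} (ltA : A → A → Prop) (u v : FreeMonoid A) : Prop :=
  u.length < v.length ∨ (u.length = v.length ∧ List.Lex ltA u.toList v.toList)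

/-- Normal words of `k⟨X⟩ ⊗ k⟨Y⟩`: the monoid `X* × Y*`
(whose multiplication is `(u^X u^Y)(v^X v^Y) = u^X v^X u^Y v^Y`). -/
abbrev NW (X Y : Type*) := FreeMonoid X × FreeMonoid Y

/-- the (deg-)lex order on `N = X*Y*` built from orders on `X*` and `Y*`:
`u > v` iff `u^X > v^X` or (`u^X = v^X` and `u^Y > v^Y`). -/
def lexNW {X Y : Type*} (ltX : FreeMonoid X → FreeMonoid X → Prop)
    (ltY : FreeMonoid Y → FreeMonoid Y → Prop) (u v : NW X Y) : Prop :=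
  ltX u.1 v.1 ∨ (u.1 = v.1 ∧ ltY u.2 v.2)

/-- All compositions `(f,g)_w = p` in `k⟨X⟩ ⊗ k⟨Y⟩`, where `mf, mg` are the leading
words of `f, g`.  The cases are: 1.1 `X`-inclusion only, 1.2 `Y`-inclusion only,
1.3 `X,Y`-inclusion, 1.4 `X,Y`-skew-inclusion, 2.1 `X`-intersection only,
2.2 `Y`-intersection only, 2.3 `X,Y`-intersection, 2.4 `X,Y`-skew-intersection,
3.1 `X`-inclusion and `Y`-intersection, 3.2 `X`-intersection and `Y`-inclusion. -/
def IsComp {k X Y : Type*} [Ring k] (f g : MonoidAlgebra k (NW X Y))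
    (mf mg : NW X Y) (p : MonoidAlgebra k (NW X Y)) (w : NW X Y) : Prop :=
  let e : NW X Y → MonoidAlgebra k (NW X Y) := fun m => mono k m
  let fx := mf.1; let fy := mf.2; let gx := mg.1; let gy := mg.2
  -- 1.1 X-inclusion only
  (∃ (a b : FreeMonoid X) (c : FreeMonoid Y), fx = a * gx * b ∧
     ((w = (fx, fy * c * gy) ∧ p = f * e (1, c * gy) - e (a, fy * c) * g * e (b, 1)) ∨
      (w = (fx, gy * c * fy) ∧ p = e (1, gy * c) * f - e (a, 1) * g * e (b, c * fy)))) ∨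
  -- 1.2 Y-inclusion only
  (∃ (a : FreeMonoid X) (c d : FreeMonoid Y), fy = c * gy * d ∧
     ((w = (fx * a * gx, fy) ∧ p = f * e (a * gx, 1) - e (fx * a, c) * g * e (1, d)) ∨
      (w = (gx * a * fx, fy) ∧ p = e (gx * a, 1) * f - e (1, c) * g * e (a * fx, d)))) ∨
  -- 1.3 X,Y-inclusion
  (∃ (a b : FreeMonoid X) (c d : FreeMonoid Y), fx = a * gx * b ∧ fy = c * gy * d ∧
     w = (fx, fy) ∧ p = f - e (a, c) * g * e (b, d)) ∨
  -- 1.4 X,Y-skew-inclusion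
  (∃ (a b : FreeMonoid X) (c d : FreeMonoid Y), fx = a * gx * b ∧ gy = c * fy * d ∧
     w = (fx, gy) ∧ p = e (1, c) * f * e (1, d) - e (a, 1) * g * e (b, 1)) ∨
  -- 2.1 X-intersection only
  (∃ (a b : FreeMonoid X) (c : FreeMonoid Y), fx * a = b * gx ∧
     (fx * a).length < fx.length + gx.length ∧
     ((w = (fx * a, fy * c * gy) ∧ p = f * e (a, c * gy) - e (b, fy * c) * g) ∨
      (w = (fx * a, gy * c * fy) ∧
        p = e (1, gy * c) * f * e (a, 1) - e (b, 1) * g * e (1, c * fy)))) ∨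
  -- 2.2 Y-intersection only
  (∃ (a : FreeMonoid X) (c d : FreeMonoid Y), fy * c = d * gy ∧
     (fy * c).length < fy.length + gy.length ∧
     ((w = (fx * a * gx, fy * c) ∧ p = f * e (a * gx, c) - e (fx * a, d) * g) ∨
      (w = (gx * a * fx, fy * c) ∧
        p = e (gx * a, 1) * f * e (1, c) - e (1, d) * g * e (a * fx, 1)))) ∨
  -- 2.3 X,Y-intersection
  (∃ (a b : FreeMonoid X) (c d : FreeMonoid Y), fx * a = b * gx ∧ fy * c = d * gy ∧
     (fx * a).length < fx.length + gx.length ∧ (fy * c).length < fy.length + gy.length ∧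
     w = (fx * a, fy * c) ∧ p = f * e (a, c) - e (b, d) * g) ∨
  -- 2.4 X,Y-skew-intersection
  (∃ (a b : FreeMonoid X) (c d : FreeMonoid Y), fx * a = b * gx ∧ c * fy = gy * d ∧
     (fx * a).length < fx.length + gx.length ∧ (c * fy).length < fy.length + gy.length ∧
     w = (fx * a, c * fy) ∧ p = e (1, c) * f * e (a, 1) - e (b, 1) * g * e (1, d)) ∨
  -- 3.1 X-inclusion and Y-intersection
  (∃ (a b : FreeMonoid X) (c d : FreeMonoid Y), fx = a * gx * b ∧
     ((fy * c = d * gy ∧ (fy * c).length < fy.length + gy.length ∧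
        w = (fx, fy * c) ∧ p = f * e (1, c) - e (a, d) * g * e (b, 1)) ∨
      (c * fy = gy * d ∧ (c * fy).length < fy.length + gy.length ∧
        w = (fx, c * fy) ∧ p = e (1, c) * f - e (a, 1) * g * e (b, d)))) ∨
  -- 3.2 X-intersection and Y-inclusion
  (∃ (a b : FreeMonoid X) (c d : FreeMonoid Y), fx * a = b * gx ∧
     (fx * a).length < fx.length + gx.length ∧
     ((fy = c * gy * d ∧ w = (fx * a, fy) ∧ p = f * e (a, 1) - e (b, c) * g * e (1, d)) ∨
      (gy = c * fy * d ∧ w = (fx * a, gy) ∧ p = e (1, c) * f * e (a, d) - e (b, 1) * g)))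

/-- Gröbner–Shirshov basis in `k⟨X⟩ ⊗ k⟨Y⟩`: a set of monic polynomials
all of whose compositions are trivial. -/
def IsGSB {k X Y : Type*} [Ring k] (lt : NW X Y → NW X Y → Prop)
    (S : Set (MonoidAlgebra k (NW X Y))) : Prop :=
  (∀ s ∈ S, MonicR lt s) ∧
  ∀ f ∈ S, ∀ g ∈ S, ∀ (mf mg : NW X Y) (p : MonoidAlgebra k (NW X Y)) (w : NW X Y),
    IsLeadR lt f mf → IsLeadR lt g mg → IsComp f g mf mg p w → TrivModR lt S w p

/-- the abelianization map `γ : X* → [X]`, with `[X]` the free commutative monoid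
on `X` realized as `Multiplicative (Multiset X)`. -/
def gam {X : Type*} (u : FreeMonoid X) : Multiplicative (Multiset X) :=
  Multiplicative.ofAdd (↑u.toList : Multiset X)

/-- the order on `X*` lifted from a monomial order on `[X]`:
`u > v` iff `γ(u) > γ(v)`, or `γ(u) = γ(v)` and `u >_lex v`. -/
def liftOrd {X : Type*} [LinearOrder X]
    (ltC : Multiplicative (Multiset X) → Multiplicative (Multiset X) → Prop)
    (u v : FreeMonoid X) : Prop :=
  ltC (gam u) (gam v) ∨ (gam u = gam v ∧ List.Lex (· < ·) u.toList v.toList)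

/-- `δ` on monomials: the weakly increasing word representing a commutative monomial. -/
noncomputable def dword {X : Type*} [LinearOrder X] (m : Multiplicative (Multiset X)) :
    FreeMonoid X :=
  FreeMonoid.ofList (Multiset.sort (Multiplicative.toAdd m) (· ≤ ·))

/-- the lexicographic splitting `δ : k[X] → k⟨X⟩`. -/
noncomputable def deltaMap {k X : Type*} [Semiring k] [LinearOrder X]
    (f : MonoidAlgebra k (Multiplicative (Multiset X))) :
    MonoidAlgebra k (FreeMonoid X) :=
  MonoidAlgebra.ofCoeff (Finsupp.mapDomain dword f.coeff)

/-- the set `S₁ = {xᵢxⱼ - xⱼxᵢ : xᵢ > xⱼ}` of commutators in `k⟨X⟩`. -/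
noncomputable def commSet (k X : Type*) [Ring k] [LinearOrder X] :
    Set (MonoidAlgebra k (FreeMonoid X)) :=
  {p | ∃ i j : X, j < i ∧
    p = mono k (FreeMonoid.of i * FreeMonoid.of j) - mono k (FreeMonoid.of j * FreeMonoid.of i)}

/-- `U(m)`: commutative monomials in the variables strictly between the least and the
greatest variable occurring in `m`. -/
def UU {X : Type*} [LinearOrder X] (m : Multiplicative (Multiset X)) :
    Set (Multiplicative (Multiset X)) :=
  {u | ∀ y ∈ Multiplicative.toAdd u,
     (∃ z ∈ Multiplicative.toAdd m, z < y) ∧ (∃ z ∈ Multiplicative.toAdd m, y < z)}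

/-- Normal words of `k[X] ⊗ k⟨Y⟩`: the monoid `[X]Y*`. -/
abbrev CW (X Y : Type*) := Multiplicative (Multiset X) × FreeMonoid Y

/-- the order on `[X]Y*`: compare the `Y`-part first, then the `[X]`-part. -/
def cwOrd {X Y : Type*}
    (ltC : Multiplicative (Multiset X) → Multiplicative (Multiset X) → Prop)
    (ltY : FreeMonoid Y → FreeMonoid Y → Prop) (u v : CW X Y) : Prop :=
  ltY u.2 v.2 ∨ (u.2 = v.2 ∧ ltC u.1 v.1)

/-- the order on `X*Y*` lifted from the order on `[X]Y*`, breaking ties by `lex`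
on the `X`-component. -/
def liftNW {X Y : Type*} [LinearOrder X]
    (ltC : Multiplicative (Multiset X) → Multiplicative (Multiset X) → Prop)
    (ltY : FreeMonoid Y → FreeMonoid Y → Prop) (u v : NW X Y) : Prop :=
  cwOrd ltC ltY (gam u.1, u.2) (gam v.1, v.2) ∨
    ((gam u.1 = gam v.1 ∧ u.2 = v.2) ∧ List.Lex (· < ·) u.1.toList v.1.toList)

/-- `δ : k[X] ⊗ k⟨Y⟩ → k⟨X⟩ ⊗ k⟨Y⟩`, the lexicographic splitting extended by the
identity on `Y`-words. -/
noncomputable def deltaNW {k X Y : Type*} [Semiring k] [LinearOrder X]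
    (f : MonoidAlgebra k (CW X Y)) : MonoidAlgebra k (NW X Y) :=
  MonoidAlgebra.ofCoeff (Finsupp.mapDomain (fun m : CW X Y => ((dword m.1, m.2) : NW X Y)) f.coeff)

/-- Mikhalev–Zolotykh compositions in `k[X] ⊗ k⟨Y⟩`: inclusion `C₁`, overlap `C₂`
and external `C₃` compositions, where `mf`, `mg` are the leading words of `f`, `g`,
and `L = lcm(mf^X, mg^X)`. -/
def MZComp {k X Y : Type*} [Ring k] [DecidableEq X]
    (ltC : Multiplicative (Multiset X) → Multiplicative (Multiset X) → Prop)
    (f g : MonoidAlgebra k (CW X Y)) (mf mg : CW X Y)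
    (p : MonoidAlgebra k (CW X Y)) (w : CW X Y) : Prop :=
  let e : CW X Y → MonoidAlgebra k (CW X Y) := fun m => mono k m
  let fX := Multiplicative.toAdd mf.1; let gX := Multiplicative.toAdd mg.1
  let L : Multiset X := fX ∪ gX
  let Lf : Multiplicative (Multiset X) := Multiplicative.ofAdd (L - fX)
  let Lg : Multiplicative (Multiset X) := Multiplicative.ofAdd (L - gX)
  -- C₁ : inclusion
  (∃ c d : FreeMonoid Y, mf.2 = c * mg.2 * d ∧
     (mf.2 = mg.2 → (mg.1 = mf.1 ∨ ltC mg.1 mf.1)) ∧ (mg.2 = 1 → c = 1) ∧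
     w = (Multiplicative.ofAdd L, mf.2) ∧
     p = e (Lf, 1) * f - e (Lg, c) * g * e (1, d)) ∨
  -- C₂ : overlap
  (∃ c d c₀ : FreeMonoid Y, c₀ ≠ 1 ∧ mf.2 = c * c₀ ∧ mg.2 = c₀ * d ∧
     w = (Multiplicative.ofAdd L, mf.2 * d) ∧
     p = e (Lf, 1) * f * e (1, d) - e (Lg, c) * g) ∨
  -- C₃ : external
  (∃ c₀ : FreeMonoid Y, fX ∩ gX ≠ 0 ∧ mf.2 ≠ 1 ∧ mg.2 ≠ 1 ∧
     w = (Multiplicative.ofAdd L, mf.2 * c₀ * mg.2) ∧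
     p = e (Lf, 1) * f * e (1, c₀ * mg.2) - e (Lg, mf.2 * c₀) * g)

/-- Gröbner–Shirshov basis in `k[X] ⊗ k⟨Y⟩` in the sense of Mikhalev–Zolotykh. -/
def MZGSB {k X Y : Type*} [Ring k] [DecidableEq X]
    (ltC : Multiplicative (Multiset X) → Multiplicative (Multiset X) → Prop)
    (ltY : FreeMonoid Y → FreeMonoid Y → Prop)
    (S : Set (MonoidAlgebra k (CW X Y))) : Prop :=
  (∀ s ∈ S, MonicR (cwOrd ltC ltY) s) ∧
  ∀ f ∈ S, ∀ g ∈ S, ∀ (mf mg : CW X Y) (p : MonoidAlgebra k (CW X Y)) (w : CW X Y),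
    IsLeadR (cwOrd ltC ltY) f mf → IsLeadR (cwOrd ltC ltY) g mg →
    MZComp ltC f g mf mg p w → TrivModR (cwOrd ltC ltY) S w p

/-!
Division algorithm. By well-founded induction on the word `w`, every monomial `w` lies in the
span of the multiples `a s b` (`s ∈ S`, `a s̄ b ≤ w`) and the words of `Irr(S)` below `w`: either
`w ∈ Irr(S)`, or `w = c s̄ d` and `w` differs from a scalar multiple of `c s d` by a combination
of strictly smaller words. By linearity the same holds for every `f` whose support lies below `w`.
-/

open MonoidAlgebra

section MonomialOrder

variable {M N : Type*} [Monoid M] [Monoid N]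

theorem MonOrd.prodLex {ltM : M → M → Prop} {ltN : N → N → Prop}
    (hM : MonOrd ltM) (hN : MonOrd ltN) : MonOrd (Prod.Lex ltM ltN) := by
  have := hM.1
  have := hN.1
  refine ⟨{ }, WellFounded.prod_lex hM.2.1 hN.2.1, ?_⟩
  rintro u v w₁ w₂ (⟨_, _, h⟩ | ⟨_, h⟩)
  · exact .left _ _ (hM.2.2 _ _ _ _ h)
  · exact .right _ (hN.2.2 _ _ _ _ h)

theorem lexNW_eq_prodLex {X Y : Type*} (ltX : FreeMonoid X → FreeMonoid X → Prop)
    (ltY : FreeMonoid Y → FreeMonoid Y → Prop) : lexNW ltX ltY = Prod.Lex ltX ltY := by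
  ext u v
  exact Prod.lex_iff.symm

variable {lt : M → M → Prop}

theorem MonOrd.mul_mul_injective (h : MonOrd lt) (c d : M) :
    Function.Injective fun u => c * u * d := by
  have := h.1
  intro u v (huv : c * u * d = c * v * d)
  rcases trichotomous_of lt u v with hlt | heq | hlt
  · exact absurd (huv ▸ h.2.2 _ _ c d hlt) (irrefl_of lt _)
  · exact heq
  · exact absurd (huv ▸ h.2.2 _ _ c d hlt) (irrefl_of lt _)

end MonomialOrder

section LeadingWord

variable {k M : Type*} {lt : M → M → Prop}

theorem IsLeadR.eq_or_lt [Semiring k] {f : MonoidAlgebra k M} {m : M} (hf : IsLeadR lt f m) :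
    ∀ u ∈ f.coeff.support, u = m ∨ lt u m := fun u hu =>
  (eq_or_ne u m).imp_right (hf.2 u hu)

variable [Monoid M]

theorem mono_mul_mul_eq_mapDomain [Semiring k] (c d : M) (s : MonoidAlgebra k M) :
    mono k c * s * mono k d = mapDomain (fun u => c * u * d) s := by
  induction s using induction_linear with
  | zero => simp
  | add x y hx hy => rw [mapDomain_add, ← hx, ← hy, mul_add, add_mul]
  | single u r => simp [mono, mapDomain_single, single_mul_single]

theorem MonOrd.coeff_mono_mul_mul [Semiring k] (h : MonOrd lt) (c d : M)
    (s : MonoidAlgebra k M) (u : M) :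
    (mono k c * s * mono k d).coeff (c * u * d) = s.coeff u := by
  rw [mono_mul_mul_eq_mapDomain]
  exact Finsupp.mapDomain_apply (h.mul_mul_injective c d) s.coeff u

theorem IsLeadR.mono_mul_mul [Semiring k] (h : MonOrd lt) {s : MonoidAlgebra k M} {m : M}
    (hs : IsLeadR lt s m) (c d : M) :
    IsLeadR lt (mono k c * s * mono k d) (c * m * d) := by
  classical
  refine ⟨by rw [Finsupp.mem_support_iff, h.coeff_mono_mul_mul]; exact Finsupp.mem_support_iff.1 hs.1, ?_⟩
  intro v hv hne
  rw [mono_mul_mul_eq_mapDomain] at hv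
  obtain ⟨u, hu, rfl⟩ := Finset.mem_image.1 (Finsupp.mapDomain_support hv)
  exact h.2.2 u m c d (hs.2 u hu fun hum => hne (by rw [hum]))

theorem IsLeadR.lt_of_mem_support_sub [Ring k] {t : MonoidAlgebra k M} {m : M}
    (ht : IsLeadR lt t m) : ∀ u ∈ (t - t.coeff m • mono k m).coeff.support, lt u m := by
  classical
  intro u hu
  have hne : u ≠ m := by
    rintro rfl
    simp [mono] at hu
  refine ht.2 u ?_ hne
  simpa [mono, Finsupp.single_apply, hne.symm] using hu

end LeadingWord

section Reduction

variable {k M : Type*} [Monoid M]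

theorem mem_of_forall_mono_mem [Semiring k] {P : Submodule k (MonoidAlgebra k M)}
    {f : MonoidAlgebra k M} (hf : ∀ u ∈ f.coeff.support, mono k u ∈ P) : f ∈ P :=
  Submodule.span_le.2 (by rintro _ ⟨u, hu, rfl⟩; exact hf u hu) (mem_span_support_coeff f)

variable [Field k] (lt : M → M → Prop) (S : Set (MonoidAlgebra k M))

/-- The word `u` lies in `Irr(S)`. -/
def IsIrr (u : M) : Prop :=
  ∀ t ∈ S, ∀ mt : M, IsLeadR lt t mt → ∀ c d : M, u ≠ c * mt * d

def multiplesBelow (w : M) : Set (MonoidAlgebra k M) :=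
  {p | ∃ (a b : M) (s : MonoidAlgebra k M) (ms : M), s ∈ S ∧ IsLeadR lt s ms ∧
    (a * ms * b = w ∨ lt (a * ms * b) w) ∧ mono k a * s * mono k b = p}

def irrBelow (w : M) : Set (MonoidAlgebra k M) :=
  {p | ∃ u, IsIrr lt S u ∧ (u = w ∨ lt u w) ∧ mono k u = p}

noncomputable def normalSpan (w : M) : Submodule k (MonoidAlgebra k M) :=
  Submodule.span k (multiplesBelow lt S w ∪ irrBelow lt S w)

variable {lt S}

theorem normalSpan_mono (h : MonOrd lt) {v w : M} (hvw : lt v w) :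
    normalSpan lt S v ≤ normalSpan lt S w := by
  have := h.1
  refine Submodule.span_mono (Set.union_subset_union ?_ ?_)
  · rintro _ ⟨a, b, s, ms, hs, hms, hle, rfl⟩
    refine ⟨a, b, s, ms, hs, hms, Or.inr ?_, rfl⟩
    rcases hle with heq | hlt
    · exact heq ▸ hvw
    · exact _root_.trans hlt hvw
  · rintro _ ⟨u, hu, hle, rfl⟩
    refine ⟨u, hu, Or.inr ?_, rfl⟩
    rcases hle with rfl | hlt
    · exact hvw
    · exact _root_.trans hlt hvw

theorem mono_mem_normalSpan (h : MonOrd lt) (w : M) : mono k w ∈ normalSpan lt S w := by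
  induction w using h.2.1.induction with | _ w ih => ?_
  by_cases hw : IsIrr lt S w
  · exact Submodule.subset_span (Or.inr ⟨w, hw, Or.inl rfl, rfl⟩)
  simp only [IsIrr, not_forall, not_not] at hw
  obtain ⟨s, hs, ms, hms, c, d, rfl⟩ := hw
  set t := mono k c * s * mono k d
  have ht : IsLeadR lt t (c * ms * d) := hms.mono_mul_mul h c d
  have ht_mem : t ∈ normalSpan lt S (c * ms * d) :=
    Submodule.subset_span (Or.inl ⟨c, d, s, ms, hs, hms, Or.inl rfl, rfl⟩)
  have hrest : t - t.coeff (c * ms * d) • mono k (c * ms * d) ∈ normalSpan lt S (c * ms * d) :=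
    mem_of_forall_mono_mem fun u hu =>
      have hlt := ht.lt_of_mem_support_sub u hu
      normalSpan_mono h hlt (ih u hlt)
  have hcoeff : t.coeff (c * ms * d) ≠ 0 := Finsupp.mem_support_iff.1 ht.1
  have hdecomp : mono k (c * ms * d) = (t.coeff (c * ms * d))⁻¹ •
      (t - (t - t.coeff (c * ms * d) • mono k (c * ms * d))) := by
    rw [sub_sub_cancel, smul_smul, inv_mul_cancel₀ hcoeff, one_smul]
  rw [hdecomp]
  exact Submodule.smul_mem _ _ (Submodule.sub_mem _ ht_mem hrest)

theorem mem_normalSpan (h : MonOrd lt) {f : MonoidAlgebra k M} {w : M}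
    (hf : ∀ u ∈ f.coeff.support, u = w ∨ lt u w) : f ∈ normalSpan lt S w := by
  refine mem_of_forall_mono_mem fun u hu => ?_
  rcases hf u hu with rfl | hlt
  · exact mono_mem_normalSpan h u
  · exact normalSpan_mono h hlt (mono_mem_normalSpan h u)

theorem exists_sum_of_mem_normalSpan {f : MonoidAlgebra k M} {w : M}
    (hf : f ∈ normalSpan lt S w) :
    ∃ (n m : ℕ) (α : Fin n → k) (a b : Fin n → M)
      (s : Fin n → MonoidAlgebra k M) (β : Fin m → k) (u : Fin m → M),
      (∀ i, s i ∈ S) ∧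
      (∀ j, ∀ t ∈ S, ∀ mt : M, IsLeadR lt t mt → ∀ c d : M, u j ≠ c * mt * d) ∧
      f = (∑ i, α i • (mono k (a i) * s i * mono k (b i))) + ∑ j, β j • mono k (u j) ∧
      (∀ i, ∃ ms, IsLeadR lt (s i) ms ∧ (a i * ms * b i = w ∨ lt (a i * ms * b i) w)) ∧
      (∀ j, u j = w ∨ lt (u j) w) := by
  rw [normalSpan, Submodule.span_union, Submodule.mem_sup] at hf
  obtain ⟨x, hx, y, hy, rfl⟩ := hf
  obtain ⟨n, α, p, rfl⟩ := Submodule.mem_span_set'.1 hx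
  obtain ⟨m, β, q, rfl⟩ := Submodule.mem_span_set'.1 hy
  choose a b s ms hs hms hle hp using fun i => (p i).2
  choose u hu hule hq using fun j => (q j).2
  refine ⟨n, m, α, a, b, s, β, u, hs, hu, ?_, fun i => ⟨ms i, hms i, hle i⟩, hule⟩
  simp only [hp, hq]

end Reduction

theorem stmt_5_general {k X Y : Type*} [Field k]
    (ltX : FreeMonoid X → FreeMonoid X → Prop) (ltY : FreeMonoid Y → FreeMonoid Y → Prop)
    (hX : MonOrd ltX) (hY : MonOrd ltY)
    (S : Set (MonoidAlgebra k (NW X Y)))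
    (f : MonoidAlgebra k (NW X Y)) (mf : NW X Y) (hmf : IsLeadR (lexNW ltX ltY) f mf) :
    ∃ (n m : ℕ) (α : Fin n → k) (a b : Fin n → NW X Y)
      (s : Fin n → MonoidAlgebra k (NW X Y)) (β : Fin m → k) (u : Fin m → NW X Y),
      (∀ i, s i ∈ S) ∧
      (∀ j, ∀ t ∈ S, ∀ mt : NW X Y, IsLeadR (lexNW ltX ltY) t mt →
        ∀ c d : NW X Y, u j ≠ c * mt * d) ∧
      f = (∑ i, α i • (mono k (a i) * s i * mono k (b i))) + ∑ j, β j • mono k (u j) ∧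
      (∀ i, ∃ ms, IsLeadR (lexNW ltX ltY) (s i) ms ∧
        (a i * ms * b i = mf ∨ lexNW ltX ltY (a i * ms * b i) mf)) ∧
      (∀ j, u j = mf ∨ lexNW ltX ltY (u j) mf) := by
  rw [lexNW_eq_prodLex] at hmf ⊢
  exact exists_sum_of_mem_normalSpan (mem_normalSpan (hX.prodLex hY) hmf.eq_or_lt)

/-- for a monic subset `S` of `k⟨X⟩ ⊗ k⟨Y⟩`, every `f` can be written as
`f = Σᵢ αᵢ aᵢsᵢbᵢ + Σⱼ βⱼuⱼ` with `sᵢ ∈ S`, `uⱼ ∈ Irr(S)`, all `aᵢs̄ᵢbᵢ ≤ f̄` and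
all `uⱼ ≤ f̄`. -/
theorem stmt_5 {k X Y : Type*} [Field k]
    (ltX : FreeMonoid X → FreeMonoid X → Prop) (ltY : FreeMonoid Y → FreeMonoid Y → Prop)
    (hX : MonOrd ltX) (hY : MonOrd ltY)
    (S : Set (MonoidAlgebra k (NW X Y))) (hS : ∀ s ∈ S, MonicR (lexNW ltX ltY) s)
    (f : MonoidAlgebra k (NW X Y)) (mf : NW X Y) (hmf : IsLeadR (lexNW ltX ltY) f mf) :
    ∃ (n m : ℕ) (α : Fin n → k) (a b : Fin n → NW X Y)
      (s : Fin n → MonoidAlgebra k (NW X Y)) (β : Fin m → k) (u : Fin m → NW X Y),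
      (∀ i, s i ∈ S) ∧
      (∀ j, ∀ t ∈ S, ∀ mt : NW X Y, IsLeadR (lexNW ltX ltY) t mt →
        ∀ c d : NW X Y, u j ≠ c * mt * d) ∧
      f = (∑ i, α i • (mono k (a i) * s i * mono k (b i))) + ∑ j, β j • mono k (u j) ∧
      (∀ i, ∃ ms, IsLeadR (lexNW ltX ltY) (s i) ms ∧
        (a i * ms * b i = mf ∨ lexNW ltX ltY (a i * ms * b i) mf)) ∧
      (∀ j, u j = mf ∨ lexNW ltX ltY (u j) mf) :=
  stmt_5_general ltX ltY hX hY S f mf hmf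
end

section
/- (Composition-Diamond lemma for tensor products) Let S ⊆ k⟨X⟩ ⊗ k⟨Y⟩ be a set of monic polynomials with a monomial order on N = X*Y*. Then the following are equivalent: (1) S is a Gröbner–Shirshov basis; (2) every nonzero f ∈ Id(S) has leading word of the form as̄b for some s ∈ S, a, b ∈ N; (3) Irr(S) = {w ∈ N : w ≠ as̄b for all a, b ∈ N, s ∈ S} is a k-linear basis of the quotient algebra (k⟨X⟩ ⊗ k⟨Y⟩)/Id(S). -/
/-- the two-sided ideal of `k⟨X⟩ ⊗ k⟨Y⟩` generated by `S` (as the span of the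
set `{a s b : s ∈ S}`, which is closed under left and right multiplication). -/
noncomputable def IdTP {k X Y : Type*} [Field k] (S : Set (MonoidAlgebra k (NW X Y))) :
    Ideal (MonoidAlgebra k (NW X Y)) :=
  Ideal.span {x | ∃ a s b, s ∈ S ∧ x = a * s * b}

/-- the two-sided ideal generated by `S`, as a `k`-subspace. -/
noncomputable def IdK (k : Type*) {X Y : Type*} [Field k]
    (S : Set (MonoidAlgebra k (NW X Y))) : Submodule k (MonoidAlgebra k (NW X Y)) :=
  Submodule.span k {x | ∃ a s b, s ∈ S ∧ x = a * s * b}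

/-- `Irr(S)`: the normal words containing no leading word of an element of `S`
as a subword. -/
def IrrS {k X Y : Type*} [Field k] (lt : NW X Y → NW X Y → Prop)
    (S : Set (MonoidAlgebra k (NW X Y))) : Set (NW X Y) :=
  {w | ∀ s ∈ S, ∀ ms : NW X Y, IsLeadR lt s ms → ∀ a b : NW X Y, w ≠ a * ms * b}

/-!
Write `x ≡ 0 mod (S, w)` when `x` is a combination of multiples `a s b` (`s ∈ S`, `a, b ∈ N`)
with `a s̄ b < w`. The Composition-Diamond argument shows that (1) forces
`a₁ s₁ b₁ ≡ a₂ s₂ b₂ mod (S, w)` whenever `a₁ s̄₁ b₁ = a₂ s̄₂ b₂ = w`: in `N = X*Y*` the two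
occurrences of leading words are, independently in the `X`- and the `Y`-component, disjoint,
nested or overlapping. If both components are disjoint the congruence holds for every pair of
monic polynomials; otherwise the pair is a shifted composition, trivial by (1). Then among all
ways of writing `f ∈ Id(S)` as `Σ αᵢ aᵢ sᵢ bᵢ`, the terms with the largest leading word `W` can
be merged into one; either it survives, and `f̄ = W = a s̄ b`, or `f` has a representation with
smaller `W`: this gives (2). Conversely, under (2) a composition `(f, g)_w`, whose leading terms
cancel, is reduced to `0` modulo `S` below `w`. Reduction modulo `S` shows that `Irr(S)` spans
the quotient, and (2) says precisely that no nonzero combination of words of `Irr(S)` lies in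
`Id(S)`.
-/

open MonoidAlgebra Submodule

namespace MonOrd

variable {M : Type*} [Monoid M] {lt : M → M → Prop}

theorem trichotomous (h : MonOrd lt) (a b : M) : lt a b ∨ a = b ∨ lt b a :=
  haveI := h.1; _root_.trichotomous a b

theorem trans (h : MonOrd lt) {a b c : M} : lt a b → lt b c → lt a c :=
  haveI := h.1; _root_.trans

theorem irrefl (h : MonOrd lt) (a : M) : ¬ lt a a :=
  haveI := h.1; _root_.irrefl a

theorem asymm (h : MonOrd lt) {a b : M} (hab : lt a b) : ¬ lt b a :=
  fun hba => h.irrefl a (h.trans hab hba)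

theorem mul_lt_mul (h : MonOrd lt) (w₁ w₂ : M) {u v : M} (huv : lt u v) :
    lt (w₁ * u * w₂) (w₁ * v * w₂) :=
  h.2.2 u v w₁ w₂ huv

theorem mul_injective (h : MonOrd lt) (a b : M) : Function.Injective fun m : M => a * m * b := by
  intro u v huv
  simp only at huv
  rcases h.trichotomous u v with huv' | rfl | huv'
  · exact absurd (huv ▸ h.mul_lt_mul a b huv') (h.irrefl _)
  · rfl
  · exact absurd (huv ▸ h.mul_lt_mul a b huv') (h.irrefl _)

end MonOrd

section Monomials

variable {k M : Type*} [CommRing k] [Monoid M] {lt : M → M → Prop}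

theorem mono_mul_mono (a b : M) : mono k a * mono k b = mono k (a * b) := by
  simp [mono]

@[simp]
theorem mono_one : mono k (1 : M) = 1 :=
  map_one (of k M)

theorem mono_mul_mul_mono_assoc (u a b v : M) (x : MonoidAlgebra k M) :
    mono k u * (mono k a * x * mono k b) * mono k v = mono k (u * a) * x * mono k (b * v) := by
  simp only [← mono_mul_mono, mul_assoc]

theorem coeff_mono_mul_mul_mono (a b : M) (f : MonoidAlgebra k M) :
    (mono k a * f * mono k b).coeff = Finsupp.mapDomain (fun m => a * m * b) f.coeff := by
  induction f using MonoidAlgebra.induction_linear with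
  | zero => simp
  | add f g hf hg => simp only [mul_add, add_mul, coeff_add, hf, hg, Finsupp.mapDomain_add]
  | single m c => simp [mono, single_mul_single, Finsupp.mapDomain_single]

theorem mono_mul_mul_mono_eq_sum (a b : M) (f : MonoidAlgebra k M) :
    mono k a * f * mono k b = ∑ u ∈ f.coeff.support, f.coeff u • mono k (a * u * b) := by
  apply coeff_injective
  rw [coeff_mono_mul_mul_mono, Finsupp.mapDomain, Finsupp.sum, coeff_sum]
  refine Finset.sum_congr rfl fun u _ => ?_
  simp [mono]

theorem coeff_mono_mul_mul_mono_apply (hlt : MonOrd lt) (a b m : M) (f : MonoidAlgebra k M) :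
    (mono k a * f * mono k b).coeff (a * m * b) = f.coeff m := by
  rw [coeff_mono_mul_mul_mono, Finsupp.mapDomain_apply (hlt.mul_injective a b)]

theorem mem_support_mono_mul_mul_mono (hlt : MonOrd lt) {a b u : M} {f : MonoidAlgebra k M} :
    u ∈ (mono k a * f * mono k b).coeff.support ↔ ∃ v ∈ f.coeff.support, a * v * b = u := by
  classical
  rw [coeff_mono_mul_mul_mono, Finsupp.mapDomain_support_of_injective (hlt.mul_injective a b)]
  simp

end Monomials

namespace IsLeadR

variable {k M : Type*} [CommRing k] {lt : M → M → Prop} {f : MonoidAlgebra k M} {m : M}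

theorem ne_zero (hf : IsLeadR lt f m) : f ≠ 0 := by
  rintro rfl
  simpa using hf.1

theorem le (hf : IsLeadR lt f m) {u : M} (hu : u ∈ f.coeff.support) : u = m ∨ lt u m :=
  (eq_or_ne u m).imp_right (hf.2 u hu)

variable [Monoid M]

theorem unique (hlt : MonOrd lt) {m' : M} (h : IsLeadR lt f m) (h' : IsLeadR lt f m') :
    m = m' :=
  by_contra fun hne => hlt.asymm (h.2 m' h'.1 (Ne.symm hne)) (h'.2 m h.1 hne)

theorem mono_mul_mul_mono (hlt : MonOrd lt) (hf : IsLeadR lt f m) (a b : M) :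
    IsLeadR lt (mono k a * f * mono k b) (a * m * b) := by
  refine ⟨(mem_support_mono_mul_mul_mono hlt).2 ⟨m, hf.1, rfl⟩, fun u hu hne => ?_⟩
  obtain ⟨v, hv, rfl⟩ := (mem_support_mono_mul_mul_mono hlt).1 hu
  exact hlt.mul_lt_mul a b (hf.2 v hv fun h => hne (h ▸ rfl))

end IsLeadR

section LeadingWords

variable {k M : Type*} [CommRing k] [Monoid M] {lt : M → M → Prop} {f : MonoidAlgebra k M} {m : M}

theorem MonicR.coeff_eq_one (hlt : MonOrd lt) (hf : MonicR lt f) (hm : IsLeadR lt f m) :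
    f.coeff m = 1 := by
  obtain ⟨m', hm', h1⟩ := hf
  rwa [hm.unique hlt hm']

theorem exists_isLeadR (hlt : MonOrd lt) (hf : f ≠ 0) : ∃ m, IsLeadR lt f m := by
  let _ : LinearOrder M := @linearOrderOfSTO _ lt hlt.1 (Classical.decRel lt)
  obtain ⟨m, hm, hmax⟩ := f.coeff.support.exists_max_image id
    (Finsupp.support_nonempty_iff.2 fun h0 => hf (coeff_eq_zero.1 h0))
  exact ⟨m, hm, fun u hu hne => lt_of_le_of_ne (hmax u hu) hne⟩

theorem induction_on_lead (hlt : MonOrd lt) {motive : MonoidAlgebra k M → Prop}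
    (zero : motive 0)
    (lead : ∀ f m, IsLeadR lt f m → (∀ g, (∀ u ∈ g.coeff.support, lt u m) → motive g) → motive f)
    (f : MonoidAlgebra k M) : motive f := by
  rcases eq_or_ne f 0 with rfl | hf
  · exact zero
  obtain ⟨m, hm⟩ := exists_isLeadR hlt hf
  induction m using hlt.2.1.induction generalizing f with
  | _ m ih =>
    refine lead f m hm fun g hg => ?_
    rcases eq_or_ne g 0 with rfl | hg0
    · exact zero
    obtain ⟨m', hm'⟩ := exists_isLeadR hlt hg0
    exact ih m' (hg m' hm'.1) g hg0 hm'

theorem lt_of_mem_support_sub_smul (hf : IsLeadR lt f m) {x : MonoidAlgebra k M}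
    (hx : ∀ u ∈ x.coeff.support, u = m ∨ lt u m) (hx1 : x.coeff m = 1) {u : M}
    (hu : u ∈ (f - f.coeff m • x).coeff.support) : lt u m := by
  classical
  have hne : u ≠ m := by
    rintro rfl
    simp [hx1] at hu
  rw [coeff_sub, coeff_smul] at hu
  rcases Finset.mem_union.1 (Finsupp.support_sub hu) with hu | hu
  · exact hf.2 u hu hne
  · exact (hx u (Finsupp.support_smul hu)).resolve_left hne

end LeadingWords

section Multiples

variable {k M : Type*} [CommRing k] [Monoid M] {lt : M → M → Prop} {S : Set (MonoidAlgebra k M)}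

def multiples (lt : M → M → Prop) (S : Set (MonoidAlgebra k M)) (P : M → Prop) :
    Set (MonoidAlgebra k M) :=
  {x | ∃ a s b m, s ∈ S ∧ IsLeadR lt s m ∧ P (a * m * b) ∧ x = mono k a * s * mono k b}

theorem multiples_mono {P Q : M → Prop} (h : ∀ m, P m → Q m) :
    multiples lt S P ⊆ multiples lt S Q := by
  rintro x ⟨a, s, b, m, hs, hm, hP, rfl⟩
  exact ⟨a, s, b, m, hs, hm, h _ hP, rfl⟩

theorem span_multiples_le_top (P : M → Prop) :
    span k (multiples lt S P) ≤ span k (multiples lt S ⊤) :=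
  span_mono (multiples_mono fun _ _ => trivial)

theorem trivModR_iff_mem_span {w : M} {h : MonoidAlgebra k M} :
    TrivModR lt S w h ↔ h ∈ span k (multiples lt S (lt · w)) := by
  classical
  constructor
  · rintro ⟨n, α, a, b, s, hS, rfl, hlead⟩
    refine sum_mem fun i _ => smul_mem _ _ (subset_span ?_)
    obtain ⟨m, hm, hlt⟩ := hlead i
    exact ⟨a i, s i, b i, m, hS i, hm, hlt, rfl⟩
  · intro hmem
    obtain ⟨c, hsupp, rfl⟩ := mem_span_set.1 hmem
    let e : Fin c.support.card ≃ c.support := c.support.equivFin.symm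
    choose a s b m hs hm hlt hx using fun i => hsupp (e i).2
    refine ⟨_, fun i => c (e i), a, b, s, hs, ?_, fun i => ⟨m i, hm i, hlt i⟩⟩
    rw [Finsupp.sum, ← Finset.sum_coe_sort, ← e.sum_comp]
    exact Finset.sum_congr rfl fun i _ => by rw [← hx i]

theorem mono_mul_mul_mono_mem_span_multiples {P Q : M → Prop} (u v : M)
    (hPQ : ∀ m, P m → Q (u * m * v)) {x : MonoidAlgebra k M}
    (hx : x ∈ span k (multiples lt S P)) :
    mono k u * x * mono k v ∈ span k (multiples lt S Q) := by
  induction hx using span_induction with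
  | mem x hx =>
    obtain ⟨a, s, b, m, hs, hm, hP, rfl⟩ := hx
    refine subset_span ⟨u * a, s, b * v, m, hs, hm, ?_, mono_mul_mul_mono_assoc u a b v s⟩
    simpa only [mul_assoc] using hPQ _ hP
  | zero => simp
  | add x y _ _ hx hy => simpa only [mul_add, add_mul] using add_mem hx hy
  | smul c x _ hx => simpa only [mul_smul_comm, smul_mul_assoc] using smul_mem _ c hx

variable (hlt : MonOrd lt)
include hlt

theorem sub_mem_span_multiples_shift {s₁ s₂ : MonoidAlgebra k M} {A B C D m : M} (U V : M)
    (h : mono k A * s₁ * mono k B - mono k C * s₂ * mono k D ∈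
      span k (multiples lt S (lt · (A * m * B)))) :
    mono k (U * A) * s₁ * mono k (B * V) - mono k (U * C) * s₂ * mono k (D * V) ∈
      span k (multiples lt S (lt · (U * A * m * (B * V)))) := by
  have hshift := mono_mul_mul_mono_mem_span_multiples (Q := (lt · (U * A * m * (B * V)))) U V
    (fun m' hm' => by simpa only [mul_assoc] using hlt.mul_lt_mul U V hm') h
  simpa only [mul_sub, sub_mul, mono_mul_mul_mono_assoc] using hshift

theorem exists_mem_multiples_of_mem_support {P : M → Prop} {x : MonoidAlgebra k M}
    (hx : x ∈ span k (multiples lt S P)) {u : M} (hu : u ∈ x.coeff.support) :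
    ∃ a s b m, s ∈ S ∧ IsLeadR lt s m ∧ P (a * m * b) ∧ (u = a * m * b ∨ lt u (a * m * b)) := by
  classical
  induction hx using span_induction generalizing u with
  | mem x hx =>
    obtain ⟨a, s, b, m, hs, hm, hP, rfl⟩ := hx
    exact ⟨a, s, b, m, hs, hm, hP, (hm.mono_mul_mul_mono hlt a b).le hu⟩
  | zero => simp at hu
  | add x y _ _ hx hy =>
    rw [coeff_add] at hu
    rcases Finset.mem_union.1 (Finsupp.support_add hu) with hu | hu
    exacts [hx hu, hy hu]
  | smul c x _ hx => exact hx (Finsupp.support_smul hu)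

theorem lt_of_mem_support_of_mem_span_multiples {W : M} {x : MonoidAlgebra k M}
    (hx : x ∈ span k (multiples lt S (lt · W))) {u : M} (hu : u ∈ x.coeff.support) : lt u W := by
  obtain ⟨a, s, b, m, -, -, hW, rfl | hu⟩ := exists_mem_multiples_of_mem_support hlt hx hu
  exacts [hW, hlt.trans hu hW]

theorem eq_zero_or_exists_mem_span_multiples_le {P : M → Prop} {x : MonoidAlgebra k M}
    (hx : x ∈ span k (multiples lt S P)) :
    x = 0 ∨ ∃ W, P W ∧ x ∈ span k (multiples lt S (fun m => m = W ∨ lt m W)) := by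
  have le_of_lt {W W' : M} (h : lt W W') :
      span k (multiples lt S (fun m => m = W ∨ lt m W)) ≤
        span k (multiples lt S (fun m => m = W' ∨ lt m W')) :=
    span_mono <| multiples_mono fun m hm => Or.inr (hm.elim (· ▸ h) (hlt.trans · h))
  induction hx using span_induction with
  | mem x hx =>
    obtain ⟨a, s, b, m, hs, hm, hP, rfl⟩ := hx
    exact .inr ⟨_, hP, subset_span ⟨a, s, b, m, hs, hm, .inl rfl, rfl⟩⟩
  | zero => exact .inl rfl
  | add x y _ _ hx hy =>
    rcases hx with rfl | ⟨W₁, hP₁, hx⟩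
    · simpa using hy
    rcases hy with rfl | ⟨W₂, hP₂, hy⟩
    · simpa using .inr ⟨W₁, hP₁, hx⟩
    refine .inr ?_
    rcases hlt.trichotomous W₁ W₂ with h | rfl | h
    · exact ⟨W₂, hP₂, add_mem (le_of_lt h hx) hy⟩
    · exact ⟨W₁, hP₁, add_mem hx hy⟩
    · exact ⟨W₁, hP₁, add_mem hx (le_of_lt h hy)⟩
  | smul c x _ hx =>
    rcases hx with rfl | ⟨W, hP, hx⟩
    · simp
    · exact .inr ⟨W, hP, smul_mem _ c hx⟩

end Multiples

section Ideal

variable {k M : Type*} [CommRing k] [Monoid M] {lt : M → M → Prop} {S : Set (MonoidAlgebra k M)}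

theorem single_mul_mul_single (u v : M) (c d : k) (x : MonoidAlgebra k M) :
    single u c * x * single v d = (c * d) • (mono k u * x * mono k v) := by
  have (w : M) (e : k) : single w e = e • mono k w := by simp [mono]
  rw [this, this, smul_mul_assoc, smul_mul_assoc, mul_smul_comm, smul_smul]

theorem span_multiples_eq (hmon : ∀ s ∈ S, MonicR lt s) :
    span k (multiples lt S ⊤) = span k {x | ∃ a s b, s ∈ S ∧ x = a * s * b} := by
  refine le_antisymm (span_mono ?_) (span_le.2 ?_)
  · rintro x ⟨a, s, b, m, hs, -, -, rfl⟩
    exact ⟨mono k a, s, mono k b, hs, rfl⟩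
  · rintro x ⟨a, s, b, hs, rfl⟩
    obtain ⟨ms, hms, -⟩ := hmon s hs
    have hsmul (u v : M) : mono k u * s * mono k v ∈ span k (multiples lt S ⊤) :=
      subset_span ⟨u, s, v, ms, hs, hms, trivial, rfl⟩
    rw [← sum_coeff_single a, ← sum_coeff_single b]
    simp only [Finsupp.sum, Finset.sum_mul, Finset.mul_sum]
    refine sum_mem fun v _ => sum_mem fun u _ => ?_
    rw [single_mul_mul_single]
    exact smul_mem _ _ (hsmul u v)

theorem mem_ideal_span_iff_mem_span {x : MonoidAlgebra k M} :
    x ∈ Ideal.span {x | ∃ a s b, s ∈ S ∧ x = a * s * b} ↔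
      x ∈ span k {x | ∃ a s b, s ∈ S ∧ x = a * s * b} := by
  constructor
  · intro hx
    obtain ⟨c, hc, rfl⟩ := mem_span_set.1 hx
    refine sum_mem fun x hx => ?_
    obtain ⟨a, s, b, hs, rfl⟩ := hc hx
    change c (a * s * b) * (a * s * b) ∈ _
    rw [← mul_assoc, ← mul_assoc]
    exact subset_span ⟨_, s, b, hs, rfl⟩
  · intro hx
    induction hx using span_induction with
    | mem x hx => exact Ideal.subset_span hx
    | zero => exact zero_mem _
    | add x y _ _ hx hy => exact add_mem hx hy
    | smul c x _ hx => simpa only [Algebra.smul_def] using Ideal.mul_mem_left _ _ hx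

end Ideal

section NormalForms

variable {k M : Type*} [CommRing k] [Monoid M] {lt : M → M → Prop} {S : Set (MonoidAlgebra k M)}

def irr (lt : M → M → Prop) (S : Set (MonoidAlgebra k M)) : Set M :=
  {w | ∀ s ∈ S, ∀ ms, IsLeadR lt s ms → ∀ a b, w ≠ a * ms * b}

theorem notMem_irr_iff {w : M} :
    w ∉ irr lt S ↔ ∃ s ∈ S, ∃ ms, IsLeadR lt s ms ∧ ∃ a b, w = a * ms * b := by
  simp [irr]

theorem linearIndependent_mono (T : Set M) :
    LinearIndependent k fun u : T => mono k (u : M) :=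
  (MonoidAlgebra.basis M k).linearIndependent.comp _ Subtype.val_injective

theorem support_subset_of_mem_span_mono {T : Set M} {r : MonoidAlgebra k M}
    (hr : r ∈ span k (mono k '' T)) : ↑r.coeff.support ⊆ T := by
  classical
  induction hr using span_induction with
  | mem x hx =>
    obtain ⟨u, hu, rfl⟩ := hx
    intro v hv
    obtain rfl : v = u := by simpa [mono] using Finsupp.support_single_subset hv
    exact hu
  | zero => simp
  | add x y _ _ hx hy =>
    intro u hu
    rcases Finset.mem_union.1 (Finsupp.support_add hu) with hu | hu
    exacts [hx hu, hy hu]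
  | smul c x _ hx => exact fun u hu => hx (Finsupp.support_smul hu)

variable (hlt : MonOrd lt) (hmon : ∀ s ∈ S, MonicR lt s)
include hlt hmon

theorem exists_monic_mem_multiples_or_irr {P : M → Prop} {m : M} (hm : P m) :
    ∃ x, (x ∈ multiples lt S P ∨ x ∈ mono k '' irr lt S) ∧ x.coeff m = 1 ∧
      ∀ u ∈ x.coeff.support, u = m ∨ lt u m := by
  by_cases hirr : m ∈ irr lt S
  · refine ⟨mono k m, .inr ⟨m, hirr, rfl⟩, by simp [mono], fun u hu => .inl ?_⟩
    simpa [mono] using Finsupp.support_single_subset hu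
  obtain ⟨s, hs, ms, hms, a, b, rfl⟩ := notMem_irr_iff.1 hirr
  exact ⟨_, .inl ⟨a, s, b, ms, hs, hms, hm, rfl⟩,
    by rw [coeff_mono_mul_mul_mono_apply hlt, (hmon s hs).coeff_eq_one hlt hms],
    fun u hu => (hms.mono_mul_mul_mono hlt a b).le hu⟩

theorem exists_reduction {P : M → Prop} (hP : ∀ u v, lt u v → P v → P u)
    (f : MonoidAlgebra k M) (hf : ∀ u ∈ f.coeff.support, P u) :
    ∃ g ∈ span k (multiples lt S P), ∃ r ∈ span k (mono k '' irr lt S), f = g + r := by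
  induction f using induction_on_lead hlt with
  | zero => exact ⟨0, zero_mem _, 0, zero_mem _, by simp⟩
  | lead f m hm ih =>
    obtain ⟨x, hx, hx1, hxm⟩ := exists_monic_mem_multiples_or_irr hlt hmon (hf m hm.1)
    have hlow : ∀ u ∈ (f - f.coeff m • x).coeff.support, lt u m :=
      fun u => lt_of_mem_support_sub_smul hm hxm hx1
    obtain ⟨g, hg, r, hr, hgr⟩ := ih _ hlow fun u hu => hP u m (hlow u hu) (hf m hm.1)
    rcases hx with hx | hx
    · exact ⟨g + f.coeff m • x, add_mem hg (smul_mem _ _ (subset_span hx)), r, hr,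
        (eq_add_of_sub_eq hgr).trans (by abel)⟩
    · exact ⟨g, hg, r + f.coeff m • x, add_mem hr (smul_mem _ _ (subset_span hx)),
        (eq_add_of_sub_eq hgr).trans (by abel)⟩

theorem span_range_mkQ_irr_eq_top :
    span k (Set.range fun u : irr lt S => (span k (multiples lt S ⊤)).mkQ (mono k (u : M))) =
      ⊤ := by
  refine eq_top_iff.2 fun x _ => ?_
  obtain ⟨f, rfl⟩ := mkQ_surjective _ x
  obtain ⟨g, hg, r, hr, rfl⟩ := exists_reduction hlt hmon (P := ⊤) (fun _ _ _ _ => trivial) f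
    fun _ _ => trivial
  rw [map_add, mkQ_apply, (Quotient.mk_eq_zero _).2 hg, zero_add]
  have := apply_mem_span_image_of_mem_span (span k (multiples lt S ⊤)).mkQ hr
  rwa [← Set.image_comp, Set.image_eq_range] at this

end NormalForms

section Reducibility

variable {k M : Type*} [CommRing k] [Monoid M] {lt : M → M → Prop} {S : Set (MonoidAlgebra k M)}

def LeadWordsReducible (lt : M → M → Prop) (S : Set (MonoidAlgebra k M)) : Prop :=
  ∀ f ∈ span k (multiples lt S ⊤), ∀ m, IsLeadR lt f m → m ∉ irr lt S

def ResolvesAmbiguities (lt : M → M → Prop) (S : Set (MonoidAlgebra k M)) : Prop :=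
  ∀ W, ∀ x ∈ multiples lt S (· = W), ∀ y ∈ multiples lt S (· = W),
    x - y ∈ span k (multiples lt S (lt · W))

variable (hlt : MonOrd lt) (hmon : ∀ s ∈ S, MonicR lt s)
include hlt hmon

theorem coeff_eq_one_of_mem_multiples {W : M} {x : MonoidAlgebra k M}
    (hx : x ∈ multiples lt S (· = W)) : x.coeff W = 1 := by
  obtain ⟨a, s, b, m, hs, hm, rfl, rfl⟩ := hx
  rw [coeff_mono_mul_mul_mono_apply hlt, (hmon s hs).coeff_eq_one hlt hm]

theorem leadWordsReducible_iff_disjoint :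
    LeadWordsReducible lt S ↔
      Disjoint (span k (mono k '' irr lt S)) (span k (multiples lt S ⊤)) := by
  constructor
  · refine fun h => disjoint_def.2 fun r hr hr' => by_contra fun hr0 => ?_
    obtain ⟨m, hm⟩ := exists_isLeadR hlt hr0
    exact h r hr' m hm (support_subset_of_mem_span_mono hr hm.1)
  · intro h f hf m hm hirr
    obtain ⟨g, hg, r, hr, rfl⟩ := exists_reduction hlt hmon (P := fun u => u = m ∨ lt u m)
      (fun u v huv hv => .inr (hv.elim (· ▸ huv) (hlt.trans huv ·))) f fun u => hm.le
    have hr0 : r = 0 := disjoint_def.1 h r hr <| by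
      simpa using sub_mem hf (span_multiples_le_top _ hg)
    rw [hr0, add_zero] at hm
    obtain ⟨a, s, b, ms, hs, hms, hle, hge⟩ := exists_mem_multiples_of_mem_support hlt hg hm.1
    refine hirr s hs ms hms a b (hge.resolve_right fun hlt' => ?_)
    exact hle.elim (fun he => hlt.irrefl m (he ▸ hlt')) (hlt.asymm hlt')

theorem linearIndependent_mkQ_irr_iff :
    LinearIndependent k (fun u : irr lt S => (span k (multiples lt S ⊤)).mkQ (mono k (u : M))) ↔
      LeadWordsReducible lt S := by
  rw [leadWordsReducible_iff_disjoint hlt hmon, Set.image_eq_range]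
  constructor
  · intro h
    simpa only [ker_mkQ] using range_ker_disjoint (f := (span k (multiples lt S ⊤)).mkQ) h
  · intro h
    exact (linearIndependent_mono (irr lt S)).map (by rwa [ker_mkQ])

theorem mem_span_lt_of_coeff_eq_zero (h : ResolvesAmbiguities lt S) {W : M}
    {f : MonoidAlgebra k M} (hf : f ∈ span k (multiples lt S (fun m => m = W ∨ lt m W)))
    (hfW : f.coeff W = 0) : f ∈ span k (multiples lt S (lt · W)) := by
  by_cases hx : ∃ x, x ∈ multiples lt S (· = W)
  swap
  · simp only [not_exists] at hx
    refine span_mono (fun z hz => ?_) hf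
    obtain ⟨a, s, b, m, hs, hm, hmW | hmW, rfl⟩ := hz
    · exact absurd ⟨a, s, b, m, hs, hm, hmW, rfl⟩ (hx _)
    · exact ⟨a, s, b, m, hs, hm, hmW, rfl⟩
  obtain ⟨x, hx⟩ := hx
  -- all multiples with leading word `W` agree with `x` modulo lower multiples
  have hle : span k (multiples lt S (fun m => m = W ∨ lt m W)) ≤
      (k ∙ x) ⊔ span k (multiples lt S (lt · W)) := by
    refine span_le.2 fun z hz => ?_
    obtain ⟨a, s, b, m, hs, hm, hmW | hmW, rfl⟩ := hz
    · rw [← sub_add_cancel (mono k a * s * mono k b) x]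
      exact add_mem (mem_sup_right (h W _ ⟨a, s, b, m, hs, hm, hmW, rfl⟩ x hx))
        (mem_sup_left (mem_span_singleton_self x))
    · exact mem_sup_right (subset_span ⟨a, s, b, m, hs, hm, hmW, rfl⟩)
  obtain ⟨y, hy, g, hg, rfl⟩ := mem_sup.1 (hle hf)
  obtain ⟨c, rfl⟩ := mem_span_singleton.1 hy
  have hgW : g.coeff W = 0 := Finsupp.notMem_support_iff.1 fun hW =>
    hlt.irrefl W (lt_of_mem_support_of_mem_span_multiples hlt hg hW)
  have hc : c = 0 := by
    simpa [coeff_eq_one_of_mem_multiples hlt hmon hx, hgW] using hfW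
  simpa [hc] using hg

theorem leadWordsReducible_of_resolvesAmbiguities (h : ResolvesAmbiguities lt S) :
    LeadWordsReducible lt S := by
  intro f hf m hm hirr
  obtain hf0 | ⟨W, -, hW⟩ := eq_zero_or_exists_mem_span_multiples_le hlt hf
  · exact hm.ne_zero hf0
  clear hf
  induction W using hlt.2.1.induction generalizing f with
  | _ W ih =>
  obtain ⟨a, s, b, ms, hs, hms, hle, hge⟩ := exists_mem_multiples_of_mem_support hlt hW hm.1
  have hmW : lt m W := by
    rcases hge with rfl | hge
    · exact absurd rfl (hirr s hs ms hms a b)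
    · exact hle.elim (· ▸ hge) (hlt.trans hge)
  have hfW : f.coeff W = 0 := Finsupp.notMem_support_iff.1 fun hW' =>
    (hm.le hW').elim (fun he => hlt.irrefl m (he ▸ hmW)) (hlt.asymm hmW)
  obtain hf0 | ⟨W', hW', hf'⟩ :=
    eq_zero_or_exists_mem_span_multiples_le hlt (mem_span_lt_of_coeff_eq_zero hlt hmon h hW hfW)
  · exact hm.ne_zero hf0
  · exact ih W' hW' f hm hf'

theorem trivModR_of_leadWordsReducible (h : LeadWordsReducible lt S)
    {f g : MonoidAlgebra k M} (hf : f ∈ S) (hg : g ∈ S) {mf mg : M} (hmf : IsLeadR lt f mf)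
    (hmg : IsLeadR lt g mg) {A B C D w : M} (hA : A * mf * B = w) (hC : C * mg * D = w) :
    TrivModR lt S w (mono k A * f * mono k B - mono k C * g * mono k D) := by
  have hx : mono k A * f * mono k B ∈ multiples lt S (· = w) := ⟨A, f, B, mf, hf, hmf, hA, rfl⟩
  have hy : mono k C * g * mono k D ∈ multiples lt S (· = w) := ⟨C, g, D, mg, hg, hmg, hC, rfl⟩
  have hlow : ∀ u ∈ (mono k A * f * mono k B - mono k C * g * mono k D).coeff.support, lt u w := by
    intro u hu
    refine lt_of_mem_support_sub_smul (hA ▸ hmf.mono_mul_mul_mono hlt A B)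
      (fun _ => (hC ▸ hmg.mono_mul_mul_mono hlt C D).le)
      (coeff_eq_one_of_mem_multiples hlt hmon hy) ?_
    rwa [coeff_eq_one_of_mem_multiples hlt hmon hx, one_smul]
  obtain ⟨p, hp, r, hr, hpr⟩ :=
    exists_reduction hlt hmon (fun u v huv hv => hlt.trans huv hv) _ hlow
  have hr0 : r = 0 := by
    refine disjoint_def.1 ((leadWordsReducible_iff_disjoint hlt hmon).1 h) r hr ?_
    rw [eq_sub_of_add_eq' hpr.symm]
    exact sub_mem (sub_mem (subset_span (multiples_mono (fun _ _ => trivial) hx))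
      (subset_span (multiples_mono (fun _ _ => trivial) hy))) (span_multiples_le_top _ hp)
  rw [trivModR_iff_mem_span, hpr, hr0, add_zero]
  exact hp

end Reducibility

section Disjoint

variable {k M : Type*} [CommRing k] [Monoid M] {lt : M → M → Prop} {S : Set (MonoidAlgebra k M)}

/-- The word `A v * u * B v = C u * v * D u` contains `u` and `v` at disjoint positions.
Both sides of the difference equal `Σ s₁(u) s₂(v) · (word of u, v)` up to terms in which `s₁`
or `s₂` contributes a non-leading word, and those lie below the common leading word. -/
theorem sub_mem_span_of_disjoint (hlt : MonOrd lt) (hmon : ∀ s ∈ S, MonicR lt s)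
    {s₁ s₂ : MonoidAlgebra k M} (hs₁ : s₁ ∈ S) (hs₂ : s₂ ∈ S) {m₁ m₂ : M}
    (hm₁ : IsLeadR lt s₁ m₁) (hm₂ : IsLeadR lt s₂ m₂) (A B C D : M → M)
    (hW : ∀ u v, A v * u * B v = C u * v * D u) :
    mono k (A m₂) * s₁ * mono k (B m₂) - mono k (C m₁) * s₂ * mono k (D m₁) ∈
      span k (multiples lt S (lt · (A m₂ * m₁ * B m₂))) := by
  classical
  have hswap : ∑ u ∈ s₁.coeff.support, s₁.coeff u • (mono k (C u) * s₂ * mono k (D u)) =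
      ∑ v ∈ s₂.coeff.support, s₂.coeff v • (mono k (A v) * s₁ * mono k (B v)) := by
    simp only [mono_mul_mul_mono_eq_sum, Finset.smul_sum, smul_smul, ← hW]
    rw [Finset.sum_comm]
    simp only [mul_comm]
  rw [← Finset.add_sum_erase _ _ hm₁.1, ← Finset.add_sum_erase _ _ hm₂.1,
    (hmon s₁ hs₁).coeff_eq_one hlt hm₁, (hmon s₂ hs₂).coeff_eq_one hlt hm₂, one_smul,
    one_smul] at hswap
  rw [sub_eq_sub_iff_add_eq_add.2 (hswap.symm.trans (add_comm _ _))]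
  refine sub_mem
    (sum_mem fun u hu => smul_mem _ _ (subset_span ⟨C u, s₂, D u, m₂, hs₂, hm₂, ?_, rfl⟩))
    (sum_mem fun v hv => smul_mem _ _ (subset_span ⟨A v, s₁, B v, m₁, hs₁, hm₁, ?_, rfl⟩))
  · rw [← hW]
    exact hlt.mul_lt_mul _ _ (hm₁.2 u (Finset.mem_of_mem_erase hu) (Finset.ne_of_mem_erase hu))
  · rw [hW, hW]
    exact hlt.mul_lt_mul _ _ (hm₂.2 v (Finset.mem_of_mem_erase hv) (Finset.ne_of_mem_erase hv))

end Disjoint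

theorem FreeMonoid.mul_eq_mul_iff {Z : Type*} {a b c d : FreeMonoid Z} :
    a * b = c * d ↔ (∃ t, c = a * t ∧ b = t * d) ∨ ∃ t, a = c * t ∧ d = t * b :=
  List.append_eq_append_iff

section Overlaps

variable {Z : Type*}

/-- `A * m₁ * B = C * m₂ * D` is a word made of an occurrence of `m₁` and an occurrence of `m₂`
starting no earlier, with nothing before or after them: the two occurrences are disjoint
(separated by `c`), nested, or properly overlapping. -/
inductive Overlap (m₁ m₂ : FreeMonoid Z) :
    FreeMonoid Z → FreeMonoid Z → FreeMonoid Z → FreeMonoid Z → Prop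
  | disjoint (c : FreeMonoid Z) : Overlap m₁ m₂ 1 (c * m₂) (m₁ * c) 1
  | inclusion (c d : FreeMonoid Z) (h : m₁ = c * m₂ * d) : Overlap m₁ m₂ 1 1 c d
  | overlap (a b : FreeMonoid Z) (h : m₁ * a = b * m₂)
      (hlen : (m₁ * a).length < m₁.length + m₂.length) : Overlap m₁ m₂ 1 a b 1

def Ambiguity (m₁ m₂ A B C D : FreeMonoid Z) : Prop :=
  Overlap m₁ m₂ A B C D ∨ Overlap m₂ m₁ C D A B

variable {m₁ m₂ A B C D : FreeMonoid Z}

theorem Overlap.mul_eq : Overlap m₁ m₂ A B C D → A * m₁ * B = C * m₂ * D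
  | .disjoint c => by simp [mul_assoc]
  | .inclusion c d h => by simp [h]
  | .overlap a b h _ => by simp [h]

theorem Ambiguity.mul_eq (h : Ambiguity m₁ m₂ A B C D) : A * m₁ * B = C * m₂ * D :=
  h.elim Overlap.mul_eq fun h => h.mul_eq.symm

theorem Ambiguity.symm (h : Ambiguity m₁ m₂ A B C D) : Ambiguity m₂ m₁ C D A B :=
  Or.symm h

theorem exists_overlap_of_mul_eq {b₁ b₂ t : FreeMonoid Z} (h : m₁ * b₁ = t * (m₂ * b₂)) :
    ∃ V B D, Overlap m₁ m₂ 1 B t D ∧ b₁ = B * V ∧ b₂ = D * V := by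
  rcases FreeMonoid.mul_eq_mul_iff.1 h with ⟨u, rfl, rfl⟩ | ⟨u, rfl, h'⟩
  · exact ⟨b₂, u * m₂, 1, .disjoint u, by simp [mul_assoc], by simp⟩
  rcases FreeMonoid.mul_eq_mul_iff.1 h' with ⟨v, rfl, rfl⟩ | ⟨v, rfl, rfl⟩
  · exact ⟨b₁, 1, v, .inclusion t v (mul_assoc _ _ _).symm, by simp, rfl⟩
  rcases eq_or_ne u 1 with rfl | hu
  · simp only [mul_one, one_mul]
    exact ⟨b₂, v, 1, by simpa using Overlap.disjoint (m₁ := t) (m₂ := v) 1, rfl, by simp⟩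
  · refine ⟨b₂, v, 1, .overlap v t (mul_assoc _ _ _) ?_, rfl, by simp⟩
    have : u.length ≠ 0 := by rwa [Ne, FreeMonoid.length_eq_zero]
    simp only [FreeMonoid.length_mul]
    omega

theorem exists_ambiguity {a₁ b₁ a₂ b₂ : FreeMonoid Z} (h : a₁ * m₁ * b₁ = a₂ * m₂ * b₂) :
    ∃ U V A B C D, Ambiguity m₁ m₂ A B C D ∧
      a₁ = U * A ∧ b₁ = B * V ∧ a₂ = U * C ∧ b₂ = D * V := by
  simp only [mul_assoc] at h
  rcases FreeMonoid.mul_eq_mul_iff.1 h with ⟨t, rfl, h'⟩ | ⟨t, rfl, h'⟩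
  · obtain ⟨V, B, D, hO, rfl, rfl⟩ := exists_overlap_of_mul_eq h'
    exact ⟨a₁, V, 1, B, t, D, .inl hO, by simp, rfl, rfl, rfl⟩
  · obtain ⟨V, B, D, hO, rfl, rfl⟩ := exists_overlap_of_mul_eq h'
    exact ⟨a₂, V, t, D, 1, B, .inr hO, rfl, rfl, by simp, rfl⟩

end Overlaps

section Compositions

variable {k X Y : Type*} [CommRing k] {lt : NW X Y → NW X Y → Prop}
  {S : Set (MonoidAlgebra k (NW X Y))} {f g : MonoidAlgebra k (NW X Y)}
  {fx gx : FreeMonoid X} {fy gy : FreeMonoid Y}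

theorem IsComp.exists_ambiguity {p : MonoidAlgebra k (NW X Y)} {w : NW X Y}
    (h : IsComp f g (fx, fy) (gx, gy) p w) :
    ∃ AX BX CX DX AY BY CY DY, Ambiguity fx gx AX BX CX DX ∧ Ambiguity fy gy AY BY CY DY ∧
      w = (AX * fx * BX, AY * fy * BY) ∧
      p = mono k (AX, AY) * f * mono k (BX, BY) - mono k (CX, CY) * g * mono k (DX, DY) := by
  simp only [IsComp] at h
  rcases h with ⟨a, b, c, h1, ⟨rfl, rfl⟩ | ⟨rfl, rfl⟩⟩ | ⟨a, c, d, h1, ⟨rfl, rfl⟩ | ⟨rfl, rfl⟩⟩ |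
    ⟨a, b, c, d, h1, h2, rfl, rfl⟩ | ⟨a, b, c, d, h1, h2, rfl, rfl⟩ |
    ⟨a, b, c, h1, hl, ⟨rfl, rfl⟩ | ⟨rfl, rfl⟩⟩ | ⟨a, c, d, h1, hl, ⟨rfl, rfl⟩ | ⟨rfl, rfl⟩⟩ |
    ⟨a, b, c, d, h1, h2, hl1, hl2, rfl, rfl⟩ | ⟨a, b, c, d, h1, h2, hl1, hl2, rfl, rfl⟩ |
    ⟨a, b, c, d, h1, ⟨h2, hl, rfl, rfl⟩ | ⟨h2, hl, rfl, rfl⟩⟩ |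
    ⟨a, b, c, d, h1, hl, ⟨h2, rfl, rfl⟩ | ⟨h2, rfl, rfl⟩⟩
  · refine ⟨_, _, _, _, _, _, _, _, .inl (.inclusion a b h1), .inl (.disjoint c), ?_, ?_⟩ <;>
      simp [mul_assoc, Prod.mk_one_one]
  · refine ⟨_, _, _, _, _, _, _, _, .inl (.inclusion a b h1), .inr (.disjoint c), ?_, ?_⟩ <;>
      simp [mul_assoc, Prod.mk_one_one]
  · refine ⟨_, _, _, _, _, _, _, _, .inl (.disjoint a), .inl (.inclusion c d h1), ?_, ?_⟩ <;>
      simp [mul_assoc, Prod.mk_one_one]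
  · refine ⟨_, _, _, _, _, _, _, _, .inr (.disjoint a), .inl (.inclusion c d h1), ?_, ?_⟩ <;>
      simp [mul_assoc, Prod.mk_one_one]
  · refine ⟨_, _, _, _, _, _, _, _, .inl (.inclusion a b h1), .inl (.inclusion c d h2), ?_, ?_⟩ <;>
      simp [mul_assoc, Prod.mk_one_one]
  · refine ⟨_, _, _, _, _, _, _, _, .inl (.inclusion a b h1), .inr (.inclusion c d h2), ?_, ?_⟩ <;>
      simp [mul_assoc, h2]
  · refine ⟨_, _, _, _, _, _, _, _, .inl (.overlap a b h1 hl), .inl (.disjoint c), ?_, ?_⟩ <;>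
      simp [mul_assoc, Prod.mk_one_one]
  · refine ⟨_, _, _, _, _, _, _, _, .inl (.overlap a b h1 hl), .inr (.disjoint c), ?_, ?_⟩ <;>
      simp [mul_assoc]
  · refine ⟨_, _, _, _, _, _, _, _, .inl (.disjoint a), .inl (.overlap c d h1 hl), ?_, ?_⟩ <;>
      simp [mul_assoc, Prod.mk_one_one]
  · refine ⟨_, _, _, _, _, _, _, _, .inr (.disjoint a), .inl (.overlap c d h1 hl), ?_, ?_⟩ <;>
      simp [mul_assoc]
  · refine ⟨_, _, _, _, _, _, _, _, .inl (.overlap a b h1 hl1), .inl (.overlap c d h2 hl2),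
      ?_, ?_⟩ <;> simp [Prod.mk_one_one]
  · refine ⟨_, _, _, _, _, _, _, _, .inl (.overlap a b h1 hl1),
      .inr (.overlap d c h2.symm (by rwa [← h2, add_comm])), ?_, ?_⟩ <;> simp [mul_assoc]
  · refine ⟨_, _, _, _, _, _, _, _, .inl (.inclusion a b h1), .inl (.overlap c d h2 hl), ?_, ?_⟩ <;>
      simp [mul_assoc, Prod.mk_one_one]
  · refine ⟨_, _, _, _, _, _, _, _, .inl (.inclusion a b h1),
      .inr (.overlap d c h2.symm (by rwa [← h2, add_comm])), ?_, ?_⟩ <;>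
      simp [mul_assoc, Prod.mk_one_one]
  · refine ⟨_, _, _, _, _, _, _, _, .inl (.overlap a b h1 hl), .inl (.inclusion c d h2), ?_, ?_⟩ <;>
      simp [mul_assoc, Prod.mk_one_one]
  · refine ⟨_, _, _, _, _, _, _, _, .inl (.overlap a b h1 hl), .inr (.inclusion c d h2), ?_, ?_⟩ <;>
      simp [mul_assoc, Prod.mk_one_one, h2]

end Compositions

section CompositionsTrivial

variable {k X Y : Type*} [CommRing k] {lt : NW X Y → NW X Y → Prop}
  {S : Set (MonoidAlgebra k (NW X Y))} {f g : MonoidAlgebra k (NW X Y)}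

theorem sub_mem_span_of_isComp (hgsb : IsGSB lt S) (hf : f ∈ S) (hg : g ∈ S) {mf mg : NW X Y}
    (hmf : IsLeadR lt f mf) (hmg : IsLeadR lt g mg) {A B C D : NW X Y}
    (h : IsComp f g mf mg (mono k A * f * mono k B - mono k C * g * mono k D) (A * mf * B)) :
    mono k A * f * mono k B - mono k C * g * mono k D ∈
      span k (multiples lt S (lt · (A * mf * B))) :=
  trivModR_iff_mem_span.1 (hgsb.2 f hf g hg mf mg _ _ hmf hmg h)

theorem sub_mem_span_of_isComp_symm (hgsb : IsGSB lt S) (hf : f ∈ S) (hg : g ∈ S)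
    {mf mg : NW X Y} (hmf : IsLeadR lt f mf) (hmg : IsLeadR lt g mg) {A B C D : NW X Y}
    (hw : C * mg * D = A * mf * B)
    (h : IsComp g f mg mf (mono k C * g * mono k D - mono k A * f * mono k B) (C * mg * D)) :
    mono k A * f * mono k B - mono k C * g * mono k D ∈
      span k (multiples lt S (lt · (A * mf * B))) := by
  rw [← hw]
  exact sub_mem_comm_iff.1 (sub_mem_span_of_isComp hgsb hg hf hmg hmf h)

variable (hlt : MonOrd lt) (hgsb : IsGSB lt S) (hf : f ∈ S) (hg : g ∈ S)
  {fx gx : FreeMonoid X} {fy gy : FreeMonoid Y}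
  (hmf : IsLeadR lt f (fx, fy)) (hmg : IsLeadR lt g (gx, gy))
  {AX BX CX DX : FreeMonoid X} {AY BY CY DY : FreeMonoid Y}
include hlt hgsb hf hg hmf hmg

theorem sub_mem_span_of_overlap_of_overlap (hX : Overlap fx gx AX BX CX DX)
    (hY : Overlap fy gy AY BY CY DY) :
    mono k (AX, AY) * f * mono k (BX, BY) - mono k (CX, CY) * g * mono k (DX, DY) ∈
      span k (multiples lt S (lt · ((AX, AY) * (fx, fy) * (BX, BY)))) := by
  cases hX with
  | disjoint a =>
    cases hY with
    | disjoint c =>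
      exact sub_mem_span_of_disjoint hlt hgsb.1 hf hg hmf hmg (fun _ => (1, 1))
        (fun v => (a * v.1, c * v.2)) (fun u => (u.1 * a, u.2 * c)) (fun _ => (1, 1))
        fun u v => by simp [Prod.ext_iff, mul_assoc]
    | inclusion _ _ h =>
      refine sub_mem_span_of_isComp hgsb hf hg hmf hmg ?_
      iterate 1 right
      exact .inl ⟨a, _, _, h, .inl ⟨by simp [mul_assoc], by simp [Prod.mk_one_one]⟩⟩
    | overlap _ _ h hl =>
      refine sub_mem_span_of_isComp hgsb hf hg hmf hmg ?_
      iterate 5 right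
      exact .inl ⟨a, _, _, h, hl, .inl ⟨by simp [mul_assoc], by simp [Prod.mk_one_one]⟩⟩
  | inclusion _ _ h₁ =>
    refine sub_mem_span_of_isComp hgsb hf hg hmf hmg ?_
    cases hY with
    | disjoint c => exact .inl ⟨_, _, c, h₁, .inl ⟨by simp [mul_assoc], by simp [Prod.mk_one_one]⟩⟩
    | inclusion _ _ h₂ =>
      iterate 2 right
      exact .inl ⟨_, _, _, _, h₁, h₂, by simp, by simp [Prod.mk_one_one]⟩
    | overlap _ _ h₂ hl =>
      iterate 8 right
      exact .inl ⟨_, _, _, _, h₁, .inl ⟨h₂, hl, by simp, by simp [Prod.mk_one_one]⟩⟩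
  | overlap _ _ h₁ hl₁ =>
    refine sub_mem_span_of_isComp hgsb hf hg hmf hmg ?_
    cases hY with
    | disjoint c =>
      iterate 4 right
      exact .inl ⟨_, _, c, h₁, hl₁, .inl ⟨by simp [mul_assoc], by simp [Prod.mk_one_one]⟩⟩
    | inclusion _ _ h₂ =>
      iterate 9 right
      exact ⟨_, _, _, _, h₁, hl₁, .inl ⟨h₂, by simp, by simp [Prod.mk_one_one]⟩⟩
    | overlap _ _ h₂ hl₂ =>
      iterate 6 right
      exact .inl ⟨_, _, _, _, h₁, h₂, hl₁, hl₂, by simp, by simp [Prod.mk_one_one]⟩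

theorem sub_mem_span_of_overlap_of_overlap_symm (hX : Overlap fx gx AX BX CX DX)
    (hY : Overlap gy fy CY DY AY BY) :
    mono k (AX, AY) * f * mono k (BX, BY) - mono k (CX, CY) * g * mono k (DX, DY) ∈
      span k (multiples lt S (lt · ((AX, AY) * (fx, fy) * (BX, BY)))) := by
  have hw : ((CX, CY) * (gx, gy) * (DX, DY) : NW X Y) = (AX, AY) * (fx, fy) * (BX, BY) :=
    Prod.ext hX.mul_eq.symm hY.mul_eq
  cases hX with
  | disjoint a =>
    cases hY with
    | disjoint c =>
      exact sub_mem_span_of_disjoint hlt hgsb.1 hf hg hmf hmg (fun v => (1, v.2 * c))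
        (fun v => (a * v.1, 1)) (fun u => (u.1 * a, 1)) (fun u => (1, c * u.2))
        fun u v => by simp [Prod.ext_iff, mul_assoc]
    | inclusion _ _ h =>
      refine sub_mem_span_of_isComp_symm hgsb hf hg hmf hmg hw ?_
      iterate 1 right
      exact .inl ⟨a, _, _, h, .inr ⟨by simp [mul_assoc], by simp [Prod.mk_one_one]⟩⟩
    | overlap _ _ h hl =>
      refine sub_mem_span_of_isComp_symm hgsb hf hg hmf hmg hw ?_
      iterate 5 right
      exact .inl ⟨a, _, _, h, hl, .inr ⟨by simp [mul_assoc], by simp⟩⟩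
  | inclusion _ _ h₁ =>
    refine sub_mem_span_of_isComp hgsb hf hg hmf hmg ?_
    cases hY with
    | disjoint c => exact .inl ⟨_, _, c, h₁, .inr ⟨by simp [mul_assoc], by simp [Prod.mk_one_one]⟩⟩
    | inclusion _ _ h₂ =>
      iterate 3 right
      exact .inl ⟨_, _, _, _, h₁, h₂, by simp [h₂], by simp⟩
    | overlap _ _ h₂ hl =>
      iterate 8 right
      exact .inl ⟨_, _, _, _, h₁, .inr ⟨h₂.symm, by rwa [← h₂, add_comm], by simp,
        by simp [Prod.mk_one_one]⟩⟩
  | overlap _ _ h₁ hl₁ =>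
    refine sub_mem_span_of_isComp hgsb hf hg hmf hmg ?_
    cases hY with
    | disjoint c =>
      iterate 4 right
      exact .inl ⟨_, _, c, h₁, hl₁, .inr ⟨by simp [mul_assoc], by simp⟩⟩
    | inclusion _ _ h₂ =>
      iterate 9 right
      exact ⟨_, _, _, _, h₁, hl₁, .inr ⟨h₂, by simp [h₂], by simp [Prod.mk_one_one]⟩⟩
    | overlap _ _ h₂ hl₂ =>
      iterate 7 right
      exact .inl ⟨_, _, _, _, h₁, h₂.symm, hl₁, by rwa [← h₂, add_comm], by simp,
        by simp⟩

theorem sub_mem_span_of_ambiguity (hX : Ambiguity fx gx AX BX CX DX)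
    (hY : Ambiguity fy gy AY BY CY DY) :
    mono k (AX, AY) * f * mono k (BX, BY) - mono k (CX, CY) * g * mono k (DX, DY) ∈
      span k (multiples lt S (lt · ((AX, AY) * (fx, fy) * (BX, BY)))) := by
  rcases hX with hX | hX
  · exact hY.elim (sub_mem_span_of_overlap_of_overlap hlt hgsb hf hg hmf hmg hX)
      (sub_mem_span_of_overlap_of_overlap_symm hlt hgsb hf hg hmf hmg hX)
  · rw [← show ((CX, CY) * (gx, gy) * (DX, DY) : NW X Y) = (AX, AY) * (fx, fy) * (BX, BY) from
      Prod.ext hX.mul_eq hY.mul_eq.symm]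
    refine sub_mem_comm_iff.1 (hY.symm.elim ?_ ?_)
    exacts [sub_mem_span_of_overlap_of_overlap hlt hgsb hg hf hmg hmf hX,
      sub_mem_span_of_overlap_of_overlap_symm hlt hgsb hg hf hmg hmf hX]

end CompositionsTrivial

section TensorProduct

variable {k X Y : Type*} [CommRing k] {lt : NW X Y → NW X Y → Prop}
  {S : Set (MonoidAlgebra k (NW X Y))}

theorem resolvesAmbiguities_of_isGSB (hlt : MonOrd lt) (hgsb : IsGSB lt S) :
    ResolvesAmbiguities lt S := by
  rintro W _ ⟨⟨a₁x, a₁y⟩, s₁, ⟨b₁x, b₁y⟩, ⟨m₁x, m₁y⟩, hs₁, hm₁, rfl, rfl⟩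
    _ ⟨⟨a₂x, a₂y⟩, s₂, ⟨b₂x, b₂y⟩, ⟨m₂x, m₂y⟩, hs₂, hm₂, hW, rfl⟩
  obtain ⟨UX, VX, AX, BX, CX, DX, hX, rfl, rfl, rfl, rfl⟩ :=
    exists_ambiguity (show a₁x * m₁x * b₁x = a₂x * m₂x * b₂x from congrArg Prod.fst hW.symm)
  obtain ⟨UY, VY, AY, BY, CY, DY, hY, rfl, rfl, rfl, rfl⟩ :=
    exists_ambiguity (show a₁y * m₁y * b₁y = a₂y * m₂y * b₂y from congrArg Prod.snd hW.symm)
  simpa only [Prod.mk_mul_mk] using sub_mem_span_multiples_shift hlt (UX, UY) (VX, VY)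
    (sub_mem_span_of_ambiguity hlt hgsb hs₁ hs₂ hm₁ hm₂ hX hY)

theorem isGSB_of_leadWordsReducible (hlt : MonOrd lt) (hmon : ∀ s ∈ S, MonicR lt s)
    (h : LeadWordsReducible lt S) : IsGSB lt S := by
  refine ⟨hmon, fun f hf g hg ⟨fx, fy⟩ ⟨gx, gy⟩ p w hmf hmg hcomp => ?_⟩
  obtain ⟨AX, BX, CX, DX, AY, BY, CY, DY, hX, hY, rfl, rfl⟩ := hcomp.exists_ambiguity
  exact trivModR_of_leadWordsReducible hlt hmon h hf hg hmf hmg rfl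
    (Prod.ext hX.mul_eq.symm hY.mul_eq.symm)

end TensorProduct

/-- Composition-Diamond lemma for tensor products: for a set `S` of monic
polynomials in `k⟨X⟩ ⊗ k⟨Y⟩` and a monomial order on `N = X*Y*`, the following are
equivalent: (1) `S` is a Gröbner–Shirshov basis; (2) the leading word of every nonzero
`f ∈ Id(S)` has the form `a s̄ b` with `s ∈ S`; (3) `Irr(S)` is a `k`-linear basis of
`(k⟨X⟩ ⊗ k⟨Y⟩)/Id(S)`. -/
theorem stmt_6 {k X Y : Type*} [Field k]
    (lt : NW X Y → NW X Y → Prop) (hlt : MonOrd lt)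
    (S : Set (MonoidAlgebra k (NW X Y))) (hmon : ∀ s ∈ S, MonicR lt s) :
    (IsGSB lt S ↔
      ∀ f ∈ IdTP S, f ≠ 0 → ∀ mf : NW X Y, IsLeadR lt f mf →
        ∃ s ∈ S, ∃ ms : NW X Y, IsLeadR lt s ms ∧ ∃ a b : NW X Y, mf = a * ms * b) ∧
    (IsGSB lt S ↔
      (LinearIndependent k
        (fun u : IrrS lt S => (IdK k S).mkQ (mono k u.val)) ∧
       Submodule.span k
        (Set.range fun u : IrrS lt S => (IdK k S).mkQ (mono k u.val)) = ⊤)) := by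
  have hGSB : IsGSB lt S ↔ LeadWordsReducible lt S :=
    ⟨fun h => leadWordsReducible_of_resolvesAmbiguities hlt hmon
      (resolvesAmbiguities_of_isGSB hlt h), isGSB_of_leadWordsReducible hlt hmon⟩
  have hId : IdK k S = span k (multiples lt S ⊤) := (span_multiples_eq hmon).symm
  have hmem (f : MonoidAlgebra k (NW X Y)) : f ∈ IdTP S ↔ f ∈ span k (multiples lt S ⊤) := by
    rw [IdTP, mem_ideal_span_iff_mem_span, ← span_multiples_eq hmon]
  refine ⟨hGSB.trans ⟨fun h f hf _ m hm => ?_, fun h f hf m hm => ?_⟩, hGSB.trans ?_⟩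
  · exact notMem_irr_iff.1 (h f ((hmem f).1 hf) m hm)
  · exact notMem_irr_iff.2 (h f ((hmem f).2 hf) hm.ne_zero m hm)
  · rw [hId]
    exact ⟨fun h => ⟨(linearIndependent_mkQ_irr_iff hlt hmon).2 h,
      span_range_mkQ_irr_eq_top hlt hmon⟩, fun h => (linearIndependent_mkQ_irr_iff hlt hmon).1 h.1⟩
end
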